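/- arXiv:2404.09090 — 2 statements merged into one kernel-verified Lean document; each statement's English description precedes it below -/
import Mathlib

section
/- Let ℓ > 0 be the liquidity of the active tick with boundaries 0 < p_i < p_{i+1}, and let the reserves be A = ℓ(1/√p* − 1/√p_{i+1}), B = ℓ(√p* − √p_i) for current rate p* ∈ [p_i, p_{i+1}]. After a swap of x tokens of B (with y determined by the constant product invariant), the new pool exchange rate p*_new = (B + ℓ√p_i + x)/(A + ℓ/√p_{i+1} − y) equals ((√p* + x/ℓ))². In particular, p*_new is strictly increasing in x. -/
/-- After a within-tick swap of x tokens of B, the new pool exchange rate equals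
(√p* + x/ℓ)², and it is strictly increasing in x. -/
theorem stmt6 (ℓ pi pip pstar A B : ℝ) (hℓ : 0 < ℓ) (hpi : 0 < pi) (hpp : pi < pip)
    (hlo : pi ≤ pstar) (hhi : pstar ≤ pip)
    (hA : A = ℓ * (1 / Real.sqrt pstar - 1 / Real.sqrt pip))
    (hB : B = ℓ * (Real.sqrt pstar - Real.sqrt pi)) :
    (∀ x : ℝ, -(ℓ * Real.sqrt pstar) < x →
      (B + ℓ * Real.sqrt pi + x) /
        (A + ℓ / Real.sqrt pip -
          (A + ℓ / Real.sqrt pip - ℓ ^ 2 / (B + ℓ * Real.sqrt pi + x)))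
        = (Real.sqrt pstar + x / ℓ) ^ 2) ∧
    StrictMonoOn (fun x : ℝ =>
        (B + ℓ * Real.sqrt pi + x) /
          (A + ℓ / Real.sqrt pip -
            (A + ℓ / Real.sqrt pip - ℓ ^ 2 / (B + ℓ * Real.sqrt pi + x))))
      (Set.Ioi (-(ℓ * Real.sqrt pstar))) := by
  have hkey : B + ℓ * Real.sqrt pi = ℓ * Real.sqrt pstar := by rw [hB]; ring
  have hmain : ∀ x : ℝ, -(ℓ * Real.sqrt pstar) < x →
      (B + ℓ * Real.sqrt pi + x) /
        (A + ℓ / Real.sqrt pip -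
          (A + ℓ / Real.sqrt pip - ℓ ^ 2 / (B + ℓ * Real.sqrt pi + x)))
        = (Real.sqrt pstar + x / ℓ) ^ 2 := by
    intro x hx
    have hs : 0 < ℓ * Real.sqrt pstar + x := by linarith
    rw [hkey]
    have : A + ℓ / Real.sqrt pip -
        (A + ℓ / Real.sqrt pip - ℓ ^ 2 / (ℓ * Real.sqrt pstar + x))
        = ℓ ^ 2 / (ℓ * Real.sqrt pstar + x) := by ring
    rw [this, div_div_eq_mul_div]
    field_simp
  refine ⟨hmain, ?_⟩
  have hsq : StrictMonoOn (fun x : ℝ => (Real.sqrt pstar + x / ℓ) ^ 2)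
      (Set.Ioi (-(ℓ * Real.sqrt pstar))) := by
    intro a ha b hb hab
    have hpos : ∀ c : ℝ, -(ℓ * Real.sqrt pstar) < c → 0 < Real.sqrt pstar + c / ℓ := by
      intro c hc
      have := (div_lt_div_iff_of_pos_right hℓ).2 hc
      rw [neg_div, mul_comm, mul_div_assoc, div_self hℓ.ne', mul_one] at this
      linarith
    have h1 := hpos a ha
    have h2 := hpos b hb
    have : Real.sqrt pstar + a / ℓ < Real.sqrt pstar + b / ℓ := by
      have := (div_lt_div_iff_of_pos_right hℓ).2 hab
      linarith
    nlinarith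
  exact hsq.congr fun x hx => (hmain x hx).symm
end

section
/- A within-tick swap of x > 0 tokens of B into the active tick strictly increases the pool exchange rate, and a swap of x < 0 (with x > −(√p* − √p_i)ℓ) strictly decreases it. -/
/-- A within-tick swap of x > 0 tokens of B strictly increases the pool exchange rate,
and a swap of x < 0 (with x > −(√p* − √p_i)ℓ) strictly decreases it. -/
theorem stmt7 (ℓ pi pip pstar A B : ℝ) (hℓ : 0 < ℓ) (hpi : 0 < pi) (hpp : pi < pip)
    (hlo : pi < pstar) (hhi : pstar < pip)
    (hA : A = ℓ * (1 / Real.sqrt pstar - 1 / Real.sqrt pip))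
    (hB : B = ℓ * (Real.sqrt pstar - Real.sqrt pi)) :
    (∀ x : ℝ, 0 < x →
      pstar < (B + ℓ * Real.sqrt pi + x) /
        (A + ℓ / Real.sqrt pip -
          (A + ℓ / Real.sqrt pip - ℓ ^ 2 / (B + ℓ * Real.sqrt pi + x)))) ∧
    (∀ x : ℝ, x < 0 → -((Real.sqrt pstar - Real.sqrt pi) * ℓ) < x →
      (B + ℓ * Real.sqrt pi + x) /
        (A + ℓ / Real.sqrt pip -
          (A + ℓ / Real.sqrt pip - ℓ ^ 2 / (B + ℓ * Real.sqrt pi + x))) < pstar) := by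
  have hps : 0 < pstar := lt_trans hpi hlo
  have hs : 0 < Real.sqrt pstar := Real.sqrt_pos.mpr hps
  have hsi : 0 < Real.sqrt pi := Real.sqrt_pos.mpr hpi
  have hsis : Real.sqrt pi < Real.sqrt pstar := Real.sqrt_lt_sqrt hpi.le hlo
  have hBe : B + ℓ * Real.sqrt pi = ℓ * Real.sqrt pstar := by rw [hB]; ring
  have hsq : Real.sqrt pstar ^ 2 = pstar := Real.sq_sqrt hps.le
  have hℓ2 : (0:ℝ) < ℓ ^ 2 := by positivity
  constructor
  · intro x hx
    have hc : 0 < B + ℓ * Real.sqrt pi + x := by rw [hBe]; positivity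
    have hden : A + ℓ / Real.sqrt pip -
        (A + ℓ / Real.sqrt pip - ℓ ^ 2 / (B + ℓ * Real.sqrt pi + x))
        = ℓ ^ 2 / (B + ℓ * Real.sqrt pi + x) := by ring
    rw [hden, div_div_eq_mul_div, ← pow_two, lt_div_iff₀ hℓ2]
    have : pstar * ℓ ^ 2 = (ℓ * Real.sqrt pstar) ^ 2 := by
      rw [mul_pow, hsq]; ring
    rw [this, hBe]
    have h1 : 0 < ℓ * Real.sqrt pstar := by positivity
    nlinarith
  · intro x hx hx2
    have hc : 0 < B + ℓ * Real.sqrt pi + x := by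
      rw [hBe]; nlinarith
    have hden : A + ℓ / Real.sqrt pip -
        (A + ℓ / Real.sqrt pip - ℓ ^ 2 / (B + ℓ * Real.sqrt pi + x))
        = ℓ ^ 2 / (B + ℓ * Real.sqrt pi + x) := by ring
    rw [hden, div_div_eq_mul_div, ← pow_two, div_lt_iff₀ hℓ2]
    have heq : pstar * ℓ ^ 2 = (ℓ * Real.sqrt pstar) ^ 2 := by
      rw [mul_pow, hsq]; ring
    rw [heq, hBe]
    have h1 : ℓ * Real.sqrt pstar + x < ℓ * Real.sqrt pstar := by linarith
    have h2 : 0 < ℓ * Real.sqrt pstar + x := by nlinarith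
    nlinarith
end
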